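/- arXiv:1107.3365 — 5 statements merged into one kernel-verified Lean document; each statement's English description precedes it below -/
import Mathlib

section
/- Let X_1, X_2, … be a sequence of real-valued random variables, and suppose there are constants A > 0, a > 0, b ≥ 0 and γ ∈ (0,2) such that for all integers m ≥ 0, n ≥ 1 and all reals t ≥ 0, P{|S(m+1, m+n)| > t} ≤ A·exp(−a t² / (n + b t^γ)). Then for every 0 < c < a there exists a constant C > 0 (depending only on A, a, b, γ and c) such that for all integers n ≥ 1, m ≥ 0 and all reals t ≥ 0, P{M(m+1, m+n) > t} ≤ C·exp(−c t² / (n + b t^γ)). -/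
/-!
The Bernstein bound is self-improving. Let `T = t² / (n + b t^γ)` and `0 < θ ≪ 1`. If `T` is
small the claim is trivial, and if `n ≤ θ⁻¹` or `b t^γ ≥ θ n` the union bound over the `n` partial
sums costs a factor `n ≤ K exp((a - c) T)` only (in the latter regime `T ≳ t^(2-γ)` while
`n ≲ t^γ`). Otherwise split the block of length `n` into a head of length `p` and a tail of length
`h ≈ θ n`: if `M(1, n) > t`, then either `M(1, p) > t`, or `|S(1, p)| > (1 - ε) t`, or the maximum
over the tail exceeds `ε t`. Induction on `n` bounds the first and last events by the claim and
the middle one by the hypothesis; with `ε² = 9 θ` the three exponents exceed `c T` by a fixed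
multiple of `T`, so for `T` large each term is at most a third of `C exp(-c T)`.
-/

open MeasureTheory Finset Real

section PartialSums

variable {Ω : Type*} (X : ℕ → Ω → ℝ)

/-- The event `M(m+1, m+n) > t`. -/
def maxPartialSumExceeds (m n : ℕ) (t : ℝ) : Set Ω :=
  {ω | ∃ j ∈ Icc (m + 1) (m + n), t < |∑ i ∈ Icc (m + 1) j, X i ω|}

lemma setOf_lt_sup'_eq_maxPartialSumExceeds (m n : ℕ) (hne : (Icc (m + 1) (m + n)).Nonempty)
    (t : ℝ) :
    {ω | t < (Icc (m + 1) (m + n)).sup' hne (fun j => |∑ i ∈ Icc (m + 1) j, X i ω|)} =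
      maxPartialSumExceeds X m n t := by
  ext ω
  simp [maxPartialSumExceeds, lt_sup'_iff]

lemma sum_Icc_add_sum_Icc {M : Type*} [AddCommMonoid M] (f : ℕ → M) {m p j : ℕ}
    (hpj : m + p ≤ j) :
    ∑ i ∈ Icc (m + 1) (m + p), f i + ∑ i ∈ Icc (m + p + 1) j, f i = ∑ i ∈ Icc (m + 1) j, f i := by
  simp only [Icc_add_one_left_eq_Ioc]
  exact sum_Ioc_consecutive f (Nat.le_add_right m p) hpj

lemma maxPartialSumExceeds_add_subset (m p h : ℕ) (s r : ℝ) :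
    maxPartialSumExceeds X m (p + h) (s + r) ⊆
      maxPartialSumExceeds X m p (s + r) ∪ {ω | s < |∑ i ∈ Icc (m + 1) (m + p), X i ω|} ∪
        maxPartialSumExceeds X (m + p) h r := by
  rintro ω ⟨j, hj, hjt⟩
  rw [mem_Icc] at hj
  by_cases hjp : j ≤ m + p
  · exact Or.inl (Or.inl ⟨j, mem_Icc.2 ⟨hj.1, hjp⟩, hjt⟩)
  by_cases hs : s < |∑ i ∈ Icc (m + 1) (m + p), X i ω|
  · exact Or.inl (Or.inr hs)
  refine Or.inr ⟨j, mem_Icc.2 ⟨by omega, by omega⟩, ?_⟩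
  rw [← sum_Icc_add_sum_Icc (p := p) _ (by omega)] at hjt
  linarith [hjt.trans_le (abs_add_le _ _)]

/-- The three ways in which the induction on the block length `n` can show `P(M(1, n) > t) ≤ F n t`,
when `G` bounds the tails of the sums `S(1, k)`: trivially, by the union bound over the partial
sums, or by splitting the block into lengths `p + h` and the level into `s + r`. -/
def MaxBoundStep (F G : ℕ → ℝ → ℝ) (n : ℕ) (t : ℝ) : Prop :=
  1 ≤ F n t ∨ n * G n t ≤ F n t ∨
    ∃ p h, 1 ≤ p ∧ 1 ≤ h ∧ p + h = n ∧
      ∃ s r, 0 ≤ s ∧ 0 ≤ r ∧ s + r = t ∧ F p t + G p s + F h r ≤ F n t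

variable [MeasurableSpace Ω] (μ : Measure Ω)

lemma measure_maxPartialSumExceeds_le_sum (m n : ℕ) (t : ℝ) :
    μ (maxPartialSumExceeds X m n t) ≤
      ∑ j ∈ Icc (m + 1) (m + n), μ {ω | t < |∑ i ∈ Icc (m + 1) j, X i ω|} := by
  have : maxPartialSumExceeds X m n t =
      ⋃ j ∈ Icc (m + 1) (m + n), {ω | t < |∑ i ∈ Icc (m + 1) j, X i ω|} := by
    ext ω
    simp [maxPartialSumExceeds]
  rw [this]
  exact measure_biUnion_finset_le _ _

theorem measure_maxPartialSumExceeds_le [IsProbabilityMeasure μ] {F G : ℕ → ℝ → ℝ}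
    (hF : ∀ n t, 0 ≤ F n t) (hG : ∀ n t, 0 ≤ G n t)
    (hG_mono : ∀ k n t, 1 ≤ k → k ≤ n → 0 ≤ t → G k t ≤ G n t)
    (hXG : ∀ m k, 1 ≤ k → ∀ t, 0 ≤ t →
      μ {ω | t < |∑ i ∈ Icc (m + 1) (m + k), X i ω|} ≤ ENNReal.ofReal (G k t))
    (hstep : ∀ n, 1 ≤ n → ∀ t, 0 ≤ t → MaxBoundStep F G n t)
    (m n : ℕ) (hn : 1 ≤ n) (t : ℝ) (ht : 0 ≤ t) :
    μ (maxPartialSumExceeds X m n t) ≤ ENNReal.ofReal (F n t) := by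
  induction n using Nat.strong_induction_on generalizing m t with
  | _ n ih =>
  rcases hstep n hn t ht with hF1 | hunion | ⟨p, h, hp, hh, rfl, s, r, hs, hr, rfl, hsplit⟩
  · exact prob_le_one.trans (ENNReal.one_le_ofReal.2 hF1)
  · calc μ (maxPartialSumExceeds X m n t)
        ≤ ∑ j ∈ Icc (m + 1) (m + n), μ {ω | t < |∑ i ∈ Icc (m + 1) j, X i ω|} :=
          measure_maxPartialSumExceeds_le_sum X μ m n t
      _ ≤ ∑ _j ∈ Icc (m + 1) (m + n), ENNReal.ofReal (G n t) := by
          refine sum_le_sum fun j hj => ?_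
          obtain ⟨k, rfl⟩ : ∃ k, j = m + k := ⟨j - m, by grind⟩
          have hk : 1 ≤ k ∧ k ≤ n := by grind
          exact (hXG m k hk.1 t ht).trans (ENNReal.ofReal_le_ofReal (hG_mono k n t hk.1 hk.2 ht))
      _ = ENNReal.ofReal (n * G n t) := by
          rw [sum_const, Nat.card_Icc, nsmul_eq_mul, ENNReal.ofReal_mul (by positivity),
            ENNReal.ofReal_natCast]
          congr
          omega
      _ ≤ ENNReal.ofReal (F n t) := ENNReal.ofReal_le_ofReal hunion
  · calc μ (maxPartialSumExceeds X m (p + h) (s + r))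
        ≤ μ (maxPartialSumExceeds X m p (s + r)) +
            μ {ω | s < |∑ i ∈ Icc (m + 1) (m + p), X i ω|} +
            μ (maxPartialSumExceeds X (m + p) h r) :=
          (measure_mono (maxPartialSumExceeds_add_subset X m p h s r)).trans
            ((measure_union_le _ _).trans (add_le_add_left (measure_union_le _ _) _))
      _ ≤ ENNReal.ofReal (F p (s + r)) + ENNReal.ofReal (G p s) + ENNReal.ofReal (F h r) := by
          gcongr
          · exact ih p (by omega) m hp _ (by positivity)
          · exact hXG m p hp s hs
          · exact ih h (by omega) (m + p) hh r hr
      _ = ENNReal.ofReal (F p (s + r) + G p s + F h r) := by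
          rw [ENNReal.ofReal_add (by linarith [hF p (s + r), hG p s]) (hF h r),
            ENNReal.ofReal_add (hF p (s + r)) (hG p s)]
      _ ≤ ENNReal.ofReal (F (p + h) (s + r)) := ENNReal.ofReal_le_ofReal hsplit

end PartialSums

noncomputable def bernsteinRatio (b γ x t : ℝ) : ℝ := t ^ 2 / (x + b * t ^ γ)

noncomputable def bernsteinBound (A a b γ : ℝ) (n : ℕ) (t : ℝ) : ℝ :=
  A * exp (-(a * t ^ 2) / (n + b * t ^ γ))

lemma bernsteinBound_eq (A a b γ : ℝ) (n : ℕ) (t : ℝ) :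
    bernsteinBound A a b γ n t = A * exp (-(a * bernsteinRatio b γ n t)) := by
  rw [bernsteinBound, bernsteinRatio, neg_div, mul_div_assoc]

section Ratio

variable {b γ : ℝ}

lemma bernsteinRatio_nonneg (hb : 0 ≤ b) {x t : ℝ} (hx : 0 ≤ x) (ht : 0 ≤ t) :
    0 ≤ bernsteinRatio b γ x t := by
  unfold bernsteinRatio; positivity

lemma mul_bernsteinRatio_le {k x y t : ℝ} (hk : 0 < k) (hx : 0 < x + b * t ^ γ)
    (h : k * (x + b * t ^ γ) ≤ y + b * t ^ γ) :
    k * bernsteinRatio b γ y t ≤ bernsteinRatio b γ x t := by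
  have hy : 0 < y + b * t ^ γ := (mul_pos hk hx).trans_le h
  rw [bernsteinRatio, bernsteinRatio, mul_div_assoc', div_le_div_iff₀ hy hx]
  nlinarith [mul_le_mul_of_nonneg_left h (sq_nonneg t)]

lemma bernsteinRatio_le_of_le {x y t : ℝ} (hx : 0 < x + b * t ^ γ) (hxy : x ≤ y) :
    bernsteinRatio b γ y t ≤ bernsteinRatio b γ x t := by
  simpa using mul_bernsteinRatio_le (k := 1) one_pos hx (by linarith)

lemma sq_mul_bernsteinRatio_le (hb : 0 ≤ b) (hγ : 0 ≤ γ) {l x t : ℝ} (hl₀ : 0 ≤ l) (hl₁ : l ≤ 1)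
    (hx : 0 < x) (ht : 0 ≤ t) :
    l ^ 2 * bernsteinRatio b γ x t ≤ bernsteinRatio b γ x (l * t) := by
  have : (l * t) ^ γ ≤ t ^ γ :=
    rpow_le_rpow (by positivity) (mul_le_of_le_one_left ht hl₁) hγ
  rw [bernsteinRatio, bernsteinRatio, mul_pow, mul_div_assoc]
  gcongr

lemma bernsteinRatio_split (hb : 0 ≤ b) (hγ : 0 ≤ γ) {ε θ x p h t : ℝ} (hε₀ : 0 < ε) (hε₁ : ε ≤ 1)
    (hεθ : ε ^ 2 = 9 * θ) (hp : 0 < p) (hh : 0 < h) (hph : p + h = x) (hθh : θ * x ≤ h)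
    (hh₂ : h ≤ 2 * θ * x) (hbt : b * t ^ γ ≤ θ * x) (ht : 0 ≤ t) :
    (1 + θ) * bernsteinRatio b γ x t ≤ bernsteinRatio b γ p t ∧
      (1 - ε) ^ 2 * bernsteinRatio b γ x t ≤ bernsteinRatio b γ p ((1 - ε) * t) ∧
      (1 + θ) * bernsteinRatio b γ x t ≤ bernsteinRatio b γ h (ε * t) := by
  have hθ : 0 < θ := by nlinarith
  have hD : 0 ≤ b * t ^ γ := by positivity
  have hT : 0 ≤ bernsteinRatio b γ x t := bernsteinRatio_nonneg hb (by linarith) ht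
  refine ⟨mul_bernsteinRatio_le (by positivity) (by linarith) (by nlinarith), ?_, ?_⟩
  · calc (1 - ε) ^ 2 * bernsteinRatio b γ x t ≤ (1 - ε) ^ 2 * bernsteinRatio b γ p t := by
          gcongr
          exact bernsteinRatio_le_of_le (by linarith) (by linarith)
      _ ≤ bernsteinRatio b γ p ((1 - ε) * t) :=
          sq_mul_bernsteinRatio_le hb hγ (by linarith) (by linarith) hp ht
  · calc (1 + θ) * bernsteinRatio b γ x t ≤ ε ^ 2 * ((3 * θ)⁻¹ * bernsteinRatio b γ x t) := by
          rw [hεθ, ← mul_assoc, show 9 * θ * (3 * θ)⁻¹ = 3 by field_simp; norm_num]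
          nlinarith
      _ ≤ ε ^ 2 * bernsteinRatio b γ h t := by
          gcongr
          refine mul_bernsteinRatio_le (by positivity) (by linarith) ?_
          rw [inv_mul_le_iff₀ (by positivity)]
          nlinarith
      _ ≤ bernsteinRatio b γ h (ε * t) :=
          sq_mul_bernsteinRatio_le hb hγ hε₀.le hε₁ hh ht

end Ratio

lemma rpow_div_le_exp {x q : ℝ} (hx : 0 ≤ x) (hq : 0 < q) : (x / q) ^ q ≤ exp x :=
  calc (x / q) ^ q ≤ exp (x / q) ^ q :=
        rpow_le_rpow (by positivity)
          ((le_add_of_nonneg_right zero_le_one).trans (add_one_le_exp _)) hq.le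
    _ = exp x := by rw [← exp_mul, div_mul_cancel₀ _ hq.ne']

lemma exists_rpow_le_mul_exp_mul_rpow {s r δ : ℝ} (hs : 0 < s) (hr : 0 < r) (hδ : 0 < δ) :
    ∃ K, 0 ≤ K ∧ ∀ t, 0 ≤ t → t ^ s ≤ K * exp (δ * t ^ r) := by
  set q := s / r with hq
  have hrq : r * q = s := by rw [hq]; field_simp
  refine ⟨((δ / q) ^ q)⁻¹, by positivity, fun t ht => ?_⟩
  have key := rpow_div_le_exp (x := δ * t ^ r) (by positivity) (div_pos hs hr)
  rw [← hq, mul_div_right_comm, mul_rpow (by positivity) (by positivity), ← rpow_mul ht, hrq] at key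
  rw [inv_mul_eq_div, le_div_iff₀' (by positivity)]
  exact key

lemma exists_mul_exp_neg_bernsteinRatio_le {b γ θ δ : ℝ} (hb : 0 ≤ b) (hγ₀ : 0 < γ) (hγ₂ : γ < 2)
    (hθ : 0 < θ) (hδ : 0 < δ) :
    ∃ K, 0 ≤ K ∧ ∀ x t, 0 < x → 0 ≤ t → θ * x ≤ b * t ^ γ →
      x * exp (-(δ * bernsteinRatio b γ x t)) ≤ K := by
  rcases hb.eq_or_lt with rfl | hb
  · exact ⟨0, le_rfl, fun x t hx _ hxt => by nlinarith⟩
  set β := θ / ((1 + θ) * b)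
  obtain ⟨K, hK, hKt⟩ :=
    exists_rpow_le_mul_exp_mul_rpow hγ₀ (sub_pos.2 hγ₂) (mul_pos hδ (by positivity : 0 < β))
  refine ⟨b / θ * K, by positivity, fun x t hx ht hxt => ?_⟩
  have ht' : 0 < t := by
    rcases ht.eq_or_lt with rfl | ht'
    · rw [zero_rpow hγ₀.ne'] at hxt; nlinarith
    · exact ht'
  have hx_le : x ≤ b / θ * t ^ γ := by rw [div_mul_eq_mul_div, le_div_iff₀ hθ]; linarith
  have hβ : β * t ^ (2 - γ) ≤ bernsteinRatio b γ x t := by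
    rw [rpow_sub ht', rpow_two, bernsteinRatio, div_mul_div_comm,
      div_le_div_iff₀ (by positivity) (by positivity)]
    nlinarith [mul_le_mul_of_nonneg_left hxt (sq_nonneg t)]
  calc x * exp (-(δ * bernsteinRatio b γ x t))
      ≤ b / θ * (K * exp (δ * β * t ^ (2 - γ))) * exp (-(δ * bernsteinRatio b γ x t)) := by
        gcongr
        exact hx_le.trans (by gcongr; exact hKt t ht)
    _ = b / θ * K * exp (δ * (β * t ^ (2 - γ) - bernsteinRatio b γ x t)) := by
        rw [mul_assoc (b / θ), mul_assoc K, ← exp_add]; ring_nf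
    _ ≤ b / θ * K := by
        refine mul_le_of_le_one_right (by positivity) (exp_le_one_iff.2 ?_)
        nlinarith

lemma exp_neg_mul_le_div_three {c θ T T' : ℝ} (hc : 0 ≤ c) (hT' : (1 + θ) * T ≤ T')
    (hdecay : exp (-(c * θ * T)) ≤ 1 / 3) : exp (-(c * T')) ≤ exp (-(c * T)) / 3 :=
  calc exp (-(c * T')) ≤ exp (-(c * T)) * exp (-(c * θ * T)) := by
        rw [← exp_add]; gcongr; nlinarith
    _ ≤ exp (-(c * T)) / 3 := by rw [div_eq_mul_one_div]; gcongr

lemma exists_nat_split {θ : ℝ} (hθ : θ ≤ 1 / 2) {n : ℕ} (hn : 1 < θ * n) :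
    ∃ p h : ℕ, 1 ≤ p ∧ 1 ≤ h ∧ p + h = n ∧ θ * n ≤ h ∧ (h : ℝ) ≤ 2 * θ * n := by
  have hh := Nat.ceil_lt_add_one (by positivity : 0 ≤ θ * n)
  have hhn : ⌈θ * n⌉₊ < n := by
    have : (n : ℝ) ≥ 0 := by positivity
    exact_mod_cast (show (⌈θ * n⌉₊ : ℝ) < n by nlinarith)
  refine ⟨n - ⌈θ * n⌉₊, ⌈θ * n⌉₊, by omega, Nat.one_le_iff_ne_zero.2 ?_, by omega,
    Nat.le_ceil _, by linarith⟩
  exact (Nat.ceil_pos.2 (by linarith)).ne'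

lemma eventually_mul_exp_neg_le {δ : ℝ} (hδ : 0 < δ) (K : ℝ) {ε : ℝ} (hε : 0 < ε) :
    ∀ᶠ T in Filter.atTop, K * exp (-(δ * T)) ≤ ε := by
  have := (tendsto_exp_neg_atTop_nhds_zero.comp
    (Filter.tendsto_id.const_mul_atTop hδ)).const_mul K
  rw [mul_zero] at this
  exact this.eventually (ge_mem_nhds hε)

section Bound

variable {A a b γ : ℝ}

lemma bernsteinBound_nonneg (hA : 0 ≤ A) (n : ℕ) (t : ℝ) : 0 ≤ bernsteinBound A a b γ n t :=
  mul_nonneg hA (exp_pos _).le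

lemma bernsteinBound_mono (hA : 0 ≤ A) (ha : 0 ≤ a) (hb : 0 ≤ b) {k n : ℕ} (hk : 1 ≤ k)
    (hkn : k ≤ n) {t : ℝ} (ht : 0 ≤ t) :
    bernsteinBound A a b γ k t ≤ bernsteinBound A a b γ n t := by
  have hk' : (1 : ℝ) ≤ k := by exact_mod_cast hk
  rw [bernsteinBound_eq, bernsteinBound_eq]
  gcongr
  exact bernsteinRatio_le_of_le (by positivity) (by exact_mod_cast hkn)

end Bound

lemma maxBoundStep_bernsteinBound {A a b γ c ε θ u₀ K C : ℝ} (hA : 0 < A) (hb : 0 ≤ b) (hγ : 0 ≤ γ)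
    (hc : 0 < c) (hca : c < a) (hε₀ : 0 < ε) (hε₁ : ε ≤ 1) (hεθ : ε ^ 2 = 9 * θ)
    (hu₀ : ∀ T, u₀ ≤ T →
      exp (-(c * θ * T)) ≤ 1 / 3 ∧ A * exp (-((a * (1 - ε) ^ 2 - c) * T)) ≤ 1 / 3)
    (hK : ∀ x t, 0 < x → 0 ≤ t → θ * x ≤ b * t ^ γ →
      x * exp (-((a - c) * bernsteinRatio b γ x t)) ≤ K)
    (hC₀ : exp (c * u₀) ≤ C) (hC₁ : 1 ≤ C) (hCK : A * K ≤ C) (hCθ : A / θ ≤ C)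
    (n : ℕ) (hn : 1 ≤ n) (t : ℝ) (ht : 0 ≤ t) :
    MaxBoundStep (bernsteinBound C c b γ) (bernsteinBound A a b γ) n t := by
  unfold MaxBoundStep
  have hθ : 0 < θ := by nlinarith
  have hn' : (0 : ℝ) < n := by exact_mod_cast hn
  simp only [bernsteinBound_eq]
  set T := bernsteinRatio b γ n t
  have hT : 0 ≤ T := bernsteinRatio_nonneg hb hn'.le ht
  by_cases hTu₀ : T ≤ u₀
  · left
    calc (1 : ℝ) = exp (c * u₀) * exp (-(c * u₀)) := by rw [← exp_add]; simp
      _ ≤ C * exp (-(c * T)) := by gcongr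
  right
  by_cases hunion : θ * n ≤ b * t ^ γ ∨ θ * n ≤ 1
  · left
    have hsmall : A * (n * exp (-((a - c) * T))) ≤ C := by
      rcases hunion with h | h
      · exact (mul_le_mul_of_nonneg_left (hK n t hn' ht h) hA.le).trans hCK
      · calc A * (n * exp (-((a - c) * T))) ≤ A * (1 / θ) := by
              gcongr
              refine (mul_le_of_le_one_right hn'.le (exp_le_one_iff.2 ?_)).trans ?_
              · nlinarith
              · rwa [le_div_iff₀' hθ]
          _ ≤ C := by rwa [← div_eq_mul_one_div]
    calc n * (A * exp (-(a * T))) = A * (n * exp (-((a - c) * T))) * exp (-(c * T)) := by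
          rw [mul_assoc A, mul_assoc (n : ℝ), ← exp_add]; ring_nf
      _ ≤ C * exp (-(c * T)) := by gcongr
  right
  simp only [not_or, not_le] at hunion
  obtain ⟨p, h, hp, hh, rfl, hθh, hh₂⟩ := exists_nat_split (by nlinarith) hunion.2
  obtain ⟨hT₁, hT₂, hT₃⟩ := bernsteinRatio_split hb hγ hε₀ hε₁ hεθ (by positivity) (by positivity)
    (Nat.cast_add p h).symm hθh hh₂ hunion.1.le ht
  obtain ⟨hdecay₁, hdecay₂⟩ := hu₀ T (not_le.1 hTu₀).le
  refine ⟨p, h, hp, hh, rfl, (1 - ε) * t, ε * t, by nlinarith, by positivity, by ring, ?_⟩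
  have hterm₂ : A * exp (-(a * bernsteinRatio b γ p ((1 - ε) * t))) ≤ exp (-(c * T)) / 3 :=
    calc A * exp (-(a * bernsteinRatio b γ p ((1 - ε) * t)))
        ≤ A * exp (-((a * (1 - ε) ^ 2 - c) * T)) * exp (-(c * T)) := by
          rw [mul_assoc, ← exp_add]; gcongr; nlinarith
      _ ≤ exp (-(c * T)) / 3 := by
          nlinarith [mul_le_mul_of_nonneg_right hdecay₂ (exp_pos (-(c * T))).le]
  have hterm₁ := exp_neg_mul_le_div_three hc.le hT₁ hdecay₁
  have hterm₃ := exp_neg_mul_le_div_three hc.le hT₃ hdecay₁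
  have hexp := (exp_pos (-(c * T))).le
  nlinarith

theorem exists_forall_maxBoundStep_bernsteinBound {A a b γ c : ℝ} (hA : 0 < A) (hb : 0 ≤ b)
    (hγ₀ : 0 < γ) (hγ₂ : γ < 2) (hc : 0 < c) (hca : c < a) :
    ∃ C, 0 < C ∧ ∀ n : ℕ, 1 ≤ n → ∀ t, 0 ≤ t →
      MaxBoundStep (bernsteinBound C c b γ) (bernsteinBound A a b γ) n t := by
  set ε := (a - c) / (2 * a) with hε
  have ha : 0 < a := hc.trans hca
  have hε₀ : 0 < ε := div_pos (by linarith) (by linarith)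
  have hε₁ : ε ≤ 1 := by rw [div_le_one (by linarith)]; linarith
  have hκ : 0 < a * (1 - ε) ^ 2 - c := by
    have : a * (1 - ε) ^ 2 - c = a * ε ^ 2 := by rw [hε]; field_simp; ring
    rw [this]; positivity
  set θ := ε ^ 2 / 9
  have hθ : 0 < θ := by positivity
  obtain ⟨u₀, hu₀⟩ := Filter.eventually_atTop.1
    ((eventually_mul_exp_neg_le (mul_pos hc hθ) 1 (by norm_num : (0 : ℝ) < 1 / 3)).and
      ((eventually_mul_exp_neg_le hκ A (by norm_num : (0 : ℝ) < 1 / 3)).and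
        (Filter.eventually_ge_atTop 0)))
  obtain ⟨K, hK₀, hK⟩ := exists_mul_exp_neg_bernsteinRatio_le hb hγ₀ hγ₂ hθ (sub_pos.2 hca)
  have hexp : 1 ≤ exp (c * u₀) := one_le_exp (mul_nonneg hc.le (hu₀ u₀ le_rfl).2.2)
  have hAK : 0 ≤ A * K := mul_nonneg hA.le hK₀
  have hAθ : 0 ≤ A / θ := by positivity
  refine ⟨exp (c * u₀) + A * K + A / θ, by positivity,
    maxBoundStep_bernsteinBound hA hb hγ₀.le hc hca hε₀ hε₁ (by ring)
      (fun T hT => ⟨by simpa using (hu₀ T hT).1, (hu₀ T hT).2.1⟩) hK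
      (by linarith) (by linarith) (by linarith) (by linarith)⟩

/-- **Maximal Bernstein inequality** (Kevei–Mason, Theorem 1).
If the partial sums `S(m+1, m+n) = ∑_{i=m+1}^{m+n} X i` of a sequence of real random
variables satisfy a generalized Bernstein-type inequality
`P{|S(m+1, m+n)| > t} ≤ A · exp(−a t² / (n + b t^γ))`,
then for every `0 < c < a` there is a constant `C > 0` such that the maximum
`M(m+1, m+n) = max_{m+1 ≤ j ≤ m+n} |S(m+1, j)|` satisfies
`P{M(m+1, m+n) > t} ≤ C · exp(−c t² / (n + b t^γ))`. -/
theorem maximal_bernstein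
    {Ω : Type*} [MeasurableSpace Ω] (P : Measure Ω) [IsProbabilityMeasure P]
    (X : ℕ → Ω → ℝ) (A a b γ : ℝ)
    (hA : 0 < A) (hb : 0 ≤ b) (hγ : γ ∈ Set.Ioo (0 : ℝ) 2)
    (hBern : ∀ (m n : ℕ), 1 ≤ n → ∀ t : ℝ, 0 ≤ t →
      P {ω | t < |∑ i ∈ Finset.Icc (m + 1) (m + n), X i ω|}
        ≤ ENNReal.ofReal (A * Real.exp (-(a * t ^ 2) / (n + b * t ^ γ)))) :
    ∀ c : ℝ, 0 < c → c < a → ∃ C : ℝ, 0 < C ∧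
      ∀ (m n : ℕ) (hn : 1 ≤ n), ∀ t : ℝ, 0 ≤ t →
        P {ω | t < (Finset.Icc (m + 1) (m + n)).sup'
              (Finset.nonempty_Icc.mpr (by omega))
              (fun j => |∑ i ∈ Finset.Icc (m + 1) j, X i ω|)}
          ≤ ENNReal.ofReal (C * Real.exp (-(c * t ^ 2) / (n + b * t ^ γ))) := by
  intro c hc hca
  obtain ⟨C, hC, hstep⟩ := exists_forall_maxBoundStep_bernsteinBound hA hb hγ.1 hγ.2 hc hca
  refine ⟨C, hC, fun m n hn t ht => ?_⟩
  rw [setOf_lt_sup'_eq_maxPartialSumExceeds]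
  exact measure_maxPartialSumExceeds_le X P (bernsteinBound_nonneg hC.le)
    (bernsteinBound_nonneg hA.le)
    (fun k n t hk hkn ht => bernsteinBound_mono hA.le (hc.trans hca).le hb hk hkn ht)
    hBern hstep m n hn t ht
end

section
/- Let X_1, X_2, … be a sequence of real-valued random variables and let C > 0, v > 0, M > 0 be constants such that for all integers m ≥ 0, n ≥ 1 and all reals t ≥ 0, P{|S(m+1, m+n)| > t} ≤ exp(−C t² / (n v² + M² + t M (log n)²)). Then for every η ∈ (0,1) there exist constants A > 0, a > 0 and b ≥ 0 such that, with γ = 1 + η, for all integers m ≥ 0, n ≥ 1 and all reals t ≥ 0, P{|S(m+1, m+n)| > t} ≤ A·exp(−a t² / (n + b t^γ)). -/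
/-!
Since `log n` grows slower than any power of `n`, `(log n)^(2 + 2η) ≤ K n^η`. Hence either
`t (log n)² ≤ n`, or `n < t (log n)²`, and then `(log n)^(2 + 2η) ≤ K t^η (log n)^(2η)`, i.e.
`t (log n)² ≤ K t^(1 + η)`. So the denominator `n v² + M² + t M (log n)²` of the hypothesis is at
most `(v² + M² + M) (n + K t^(1 + η))`, which gives the bound with `A = 1`, `a = C / (v² + M² + M)`
and `b = K`.
-/

open MeasureTheory Real

lemma log_rpow_le_mul_rpow {x p ε : ℝ} (hx : 1 ≤ x) (hp : 0 < p) (hε : 0 < ε) :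
    log x ^ p ≤ (p / ε) ^ p * x ^ ε := by
  have hlog : log x ≤ p / ε * x ^ (ε / p) := by
    calc log x ≤ x ^ (ε / p) / (ε / p) := log_le_rpow_div (by linarith) (div_pos hε hp)
      _ = p / ε * x ^ (ε / p) := by rw [div_div_eq_mul_div, mul_comm]; ring
  calc log x ^ p ≤ (p / ε * x ^ (ε / p)) ^ p := rpow_le_rpow (log_nonneg hx) hlog hp.le
    _ = (p / ε) ^ p * x ^ ε := by
      rw [mul_rpow (by positivity) (by positivity), ← rpow_mul (by linarith),
        div_mul_cancel₀ _ hp.ne']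

lemma mul_le_add_mul_rpow_of_rpow_le {s t n K η : ℝ} (hs : 0 ≤ s) (ht : 0 ≤ t) (hn : 0 ≤ n)
    (hK : 0 ≤ K) (hη : 0 ≤ η) (h : s ^ (1 + η) ≤ K * n ^ η) : t * s ≤ n + K * t ^ (1 + η) := by
  rcases le_or_gt (t * s) n with hts | hts
  · have : 0 ≤ K * t ^ (1 + η) := by positivity
    linarith
  have hts0 : 0 < t * s := hn.trans_lt hts
  have hs0 : 0 < s := pos_of_mul_pos_right hts0 ht
  have ht0 : 0 < t := pos_of_mul_pos_left hts0 hs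
  have hs_le : s ≤ K * t ^ η := by
    refine le_of_mul_le_mul_left ?_ (rpow_pos_of_pos hs0 η)
    calc s ^ η * s = s ^ (1 + η) := by rw [rpow_add hs0, rpow_one, mul_comm]
      _ ≤ K * n ^ η := h
      _ ≤ K * (t * s) ^ η := by gcongr
      _ = s ^ η * (K * t ^ η) := by rw [mul_rpow ht hs]; ring
  calc t * s ≤ t * (K * t ^ η) := by gcongr
    _ = K * t ^ (1 + η) := by rw [rpow_add ht0, rpow_one]; ring
    _ ≤ n + K * t ^ (1 + η) := by linarith

lemma mul_log_sq_le {η n t : ℝ} (hη : 0 < η) (hn : 1 ≤ n) (ht : 0 ≤ t) :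
    t * log n ^ 2 ≤ n + ((2 + 2 * η) / η) ^ (2 + 2 * η) * t ^ (1 + η) := by
  refine mul_le_add_mul_rpow_of_rpow_le (sq_nonneg _) ht (by linarith) (by positivity) hη.le ?_
  have hpow : (log n ^ 2) ^ (1 + η) = log n ^ (2 + 2 * η) := by
    rw [← rpow_natCast, ← rpow_mul (log_nonneg hn)]
    ring_nf
  rw [hpow]
  exact log_rpow_le_mul_rpow hn (by positivity) hη

theorem mpr_implies_generalized_bernstein_general
    {Ω : Type*} [MeasurableSpace Ω] (P : Measure Ω)
    (X : ℕ → Ω → ℝ) (C v M : ℝ) (hC : 0 < C) (hM : 0 < M)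
    (hMPR : ∀ (m n : ℕ), 1 ≤ n → ∀ t : ℝ, 0 ≤ t →
      P {ω | t < |∑ i ∈ Finset.Icc (m + 1) (m + n), X i ω|}
        ≤ ENNReal.ofReal
            (Real.exp (-(C * t ^ 2) /
              (n * v ^ 2 + M ^ 2 + t * M * (Real.log n) ^ 2)))) :
    ∀ η : ℝ, η ∈ Set.Ioo (0 : ℝ) 1 →
      ∃ A a b : ℝ, 0 < A ∧ 0 < a ∧ 0 ≤ b ∧
        ∀ (m n : ℕ), 1 ≤ n → ∀ t : ℝ, 0 ≤ t →
          P {ω | t < |∑ i ∈ Finset.Icc (m + 1) (m + n), X i ω|}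
            ≤ ENNReal.ofReal (A * Real.exp (-(a * t ^ 2) / (n + b * t ^ (1 + η)))) := by
  rintro η ⟨hη, -⟩
  set K := ((2 + 2 * η) / η) ^ (2 + 2 * η)
  set c := v ^ 2 + M ^ 2 + M
  refine ⟨1, C / c, K, one_pos, by positivity, by positivity, fun m n hn t ht ↦ ?_⟩
  have hn1 : (1 : ℝ) ≤ n := by exact_mod_cast hn
  have hD : 0 < n * v ^ 2 + M ^ 2 + t * M * log n ^ 2 := by positivity
  have hDE : n * v ^ 2 + M ^ 2 + t * M * log n ^ 2 ≤ c * (n + K * t ^ (1 + η)) := by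
    have hKt : 0 ≤ K * t ^ (1 + η) := by positivity
    nlinarith [mul_log_sq_le hη hn1 ht, sq_nonneg v]
  refine (hMPR m n hn t ht).trans (ENNReal.ofReal_le_ofReal ?_)
  rw [one_mul, exp_le_exp, neg_div, neg_div, neg_le_neg_iff]
  calc C / c * t ^ 2 / (n + K * t ^ (1 + η)) = C * t ^ 2 / (c * (n + K * t ^ (1 + η))) := by
        rw [div_mul_eq_mul_div, div_div]
    _ ≤ C * t ^ 2 / (n * v ^ 2 + M ^ 2 + t * M * log n ^ 2) := by gcongr

/-- Example 3 of Kevei–Mason: if a sequence of real random variables satisfies the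
Merlevède–Peligrad–Rio type inequality
`P{|S(m+1, m+n)| > t} ≤ exp(−C t² / (n v² + M² + t M (log n)²))`,
then for every `η ∈ (0,1)` the generalized Bernstein-type inequality
`P{|S(m+1, m+n)| > t} ≤ A · exp(−a t² / (n + b t^γ))` holds with `γ = 1 + η`
for suitable `A > 0`, `a > 0` and `b ≥ 0`. -/
theorem mpr_implies_generalized_bernstein
    {Ω : Type*} [MeasurableSpace Ω] (P : Measure Ω) [IsProbabilityMeasure P]
    (X : ℕ → Ω → ℝ) (C v M : ℝ) (hC : 0 < C) (hv : 0 < v) (hM : 0 < M)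
    (hMPR : ∀ (m n : ℕ), 1 ≤ n → ∀ t : ℝ, 0 ≤ t →
      P {ω | t < |∑ i ∈ Finset.Icc (m + 1) (m + n), X i ω|}
        ≤ ENNReal.ofReal
            (Real.exp (-(C * t ^ 2) /
              (n * v ^ 2 + M ^ 2 + t * M * (Real.log n) ^ 2)))) :
    ∀ η : ℝ, η ∈ Set.Ioo (0 : ℝ) 1 →
      ∃ A a b : ℝ, 0 < A ∧ 0 < a ∧ 0 ≤ b ∧
        ∀ (m n : ℕ), 1 ≤ n → ∀ t : ℝ, 0 ≤ t →
          P {ω | t < |∑ i ∈ Finset.Icc (m + 1) (m + n), X i ω|}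
            ≤ ENNReal.ofReal (A * Real.exp (-(a * t ^ 2) / (n + b * t ^ (1 + η)))) :=
  mpr_implies_generalized_bernstein_general P X C v M hC hM hMPR
end

section
/- Let Y, Z_1, Z_2, … be independent random variables, where Y takes the values 0 and 1 each with probability 1/2 and Z_1, Z_2, … are standard normal. Define X_i = Y·Z_i for i ≥ 1. Then for all integers m ≥ 0, n ≥ 1 and all reals t ≥ 0, P{|S(m+1, m+n)| > t} ≤ 2·exp(−t²/(2n)); that is, the sequence X_1, X_2, … satisfies the generalized Bernstein-type inequality with constants A = 2, a = 1/2, b = 0 and γ = 1. -/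
open MeasureTheory Finset ProbabilityTheory Real
open scoped ENNReal NNReal

/-!
Conditionally on `Y`, the sum `S(m+1, m+n) = Y * ∑ Z i` is either `0` or a sum of `n`
independent standard normals. The latter is sub-Gaussian with variance proxy `n`, so the
Chernoff bound applied to both tails gives `2 exp (-t² / (2n))`.
-/

namespace ProbabilityTheory

variable {Ω : Type*} [MeasurableSpace Ω] {μ : Measure Ω} {X : Ω → ℝ}

lemma hasSubgaussianMGF_id_gaussianReal (v : ℝ≥0) :
    HasSubgaussianMGF id v (gaussianReal 0 v) where
  integrable_exp_mul := integrable_exp_mul_gaussianReal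
  mgf_le t := by simp [mgf_id_gaussianReal]

lemma hasSubgaussianMGF_of_map_eq_gaussianReal {v : ℝ≥0} (hX : μ.map X = gaussianReal 0 v) :
    HasSubgaussianMGF X v μ := by
  have hX_meas : AEMeasurable X μ := aemeasurable_of_map_neZero (by rw [hX]; infer_instance)
  rw [← HasSubgaussianMGF.id_map_iff hX_meas, hX]
  exact hasSubgaussianMGF_id_gaussianReal v

lemma HasSubgaussianMGF.measure_abs_ge_le [IsFiniteMeasure μ] {c : ℝ≥0}
    (h : HasSubgaussianMGF X c μ) {ε : ℝ} (hε : 0 ≤ ε) :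
    μ {ω | ε ≤ |X ω|} ≤ ENNReal.ofReal (2 * exp (-ε ^ 2 / (2 * c))) := by
  have h_split : {ω | ε ≤ |X ω|} = {ω | ε ≤ X ω} ∪ {ω | ε ≤ (-X) ω} := by
    ext ω
    simp only [le_abs', Set.mem_ofPred_eq, Set.mem_union, Pi.neg_apply, le_neg, or_comm]
  calc μ {ω | ε ≤ |X ω|}
      ≤ μ {ω | ε ≤ X ω} + μ {ω | ε ≤ (-X) ω} := h_split ▸ measure_union_le _ _
    _ = ENNReal.ofReal (μ.real {ω | ε ≤ X ω} + μ.real {ω | ε ≤ (-X) ω}) := by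
      rw [ENNReal.ofReal_add measureReal_nonneg measureReal_nonneg, ofReal_measureReal,
        ofReal_measureReal]
    _ ≤ ENNReal.ofReal (2 * exp (-ε ^ 2 / (2 * c))) := by
      gcongr
      linarith [h.measure_ge_le hε, h.neg.measure_ge_le hε]

lemma ae_eq_or_eq_of_map_eq_smul_dirac_add_smul_dirac (hX : AEMeasurable X μ)
    {a b : ℝ≥0∞} {x y : ℝ} (h : μ.map X = a • Measure.dirac x + b • Measure.dirac y) :
    ∀ᵐ ω ∂μ, X ω = x ∨ X ω = y := by
  refine ae_of_ae_map (p := fun z ↦ z = x ∨ z = y) hX ?_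
  rw [h, ae_add_measure_iff]
  exact ⟨Measure.ae_smul_measure (by simp [ae_dirac_eq]) a,
    Measure.ae_smul_measure (by simp [ae_dirac_eq]) b⟩

end ProbabilityTheory

theorem bernstein_for_YZ_example_general
    {Ω : Type*} [MeasurableSpace Ω] (P : Measure Ω) [IsProbabilityMeasure P]
    (Y : Ω → ℝ) (Z : ℕ → Ω → ℝ)
    (hYmeas : Measurable Y)
    (hindep : iIndepFun (m := fun _ : ℕ => (inferInstance : MeasurableSpace ℝ))
      (fun i => if i = 0 then Y else Z i) P)
    (hYdist : P.map Y
      = (2⁻¹ : ℝ≥0∞) • Measure.dirac (0 : ℝ) + (2⁻¹ : ℝ≥0∞) • Measure.dirac (1 : ℝ))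
    (hZdist : ∀ i, 1 ≤ i → P.map (Z i) = gaussianReal 0 1) :
    ∀ (m n : ℕ), 1 ≤ n → ∀ t : ℝ, 0 ≤ t →
      P {ω | t < |∑ i ∈ Finset.Icc (m + 1) (m + n), Y ω * Z i ω|}
        ≤ ENNReal.ofReal (2 * Real.exp (-t ^ 2 / (2 * n))) := by
  intro m n _ t ht
  set s := Finset.Icc (m + 1) (m + n)
  have hZ_sum : HasSubgaussianMGF (fun ω ↦ ∑ i ∈ s, Z i ω) n P := by
    have hs_ne_zero : ∀ i ∈ s, i ≠ 0 := fun i hi ↦ by simp [s] at hi; omega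
    have h := HasSubgaussianMGF.sum_of_iIndepFun hindep (c := fun _ ↦ 1) (s := s)
      fun i hi ↦ by
        have hZi := hZdist i (Nat.one_le_iff_ne_zero.2 (hs_ne_zero i hi))
        simpa [hs_ne_zero i hi] using hasSubgaussianMGF_of_map_eq_gaussianReal hZi
    simp only [sum_const, nsmul_one] at h
    convert h using 2 with ω
    · exact sum_congr rfl fun i hi ↦ by simp [hs_ne_zero i hi]
    · simp [s]
  have hY : ∀ᵐ ω ∂P, Y ω = 0 ∨ Y ω = 1 :=
    ae_eq_or_eq_of_map_eq_smul_dirac_add_smul_dirac hYmeas.aemeasurable hYdist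
  calc P {ω | t < |∑ i ∈ s, Y ω * Z i ω|}
      ≤ P {ω | t ≤ |∑ i ∈ s, Z i ω|} := by
        refine measure_mono_ae (hY.mono fun ω hω (hlt : t < _) ↦ show t ≤ _ from ?_)
        rcases hω with h0 | h1
        · simp only [h0, zero_mul, sum_const_zero, abs_zero] at hlt
          linarith
        · simpa [h1] using hlt.le
    _ ≤ ENNReal.ofReal (2 * Real.exp (-t ^ 2 / (2 * n))) := by
        simpa using hZ_sum.measure_abs_ge_le ht

/-- Remark 7 of Kevei–Mason, first part: let `Y, Z 1, Z 2, …` be independent random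
variables, where `Y` takes the values `0` and `1` each with probability `1/2` and the
`Z i` are standard normal. The sequence `X i = Y * Z i` satisfies the generalized
Bernstein-type inequality with `A = 2`, `a = 1/2`, `b = 0`, `γ = 1`:
`P{|S(m+1, m+n)| > t} ≤ 2 · exp(−t² / (2n))`. -/
theorem bernstein_for_YZ_example
    {Ω : Type*} [MeasurableSpace Ω] (P : Measure Ω) [IsProbabilityMeasure P]
    (Y : Ω → ℝ) (Z : ℕ → Ω → ℝ)
    (hYmeas : Measurable Y) (hZmeas : ∀ i, Measurable (Z i))
    (hindep : iIndepFun (m := fun _ : ℕ => (inferInstance : MeasurableSpace ℝ))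
      (fun i => if i = 0 then Y else Z i) P)
    (hYdist : P.map Y
      = (2⁻¹ : ℝ≥0∞) • Measure.dirac (0 : ℝ) + (2⁻¹ : ℝ≥0∞) • Measure.dirac (1 : ℝ))
    (hZdist : ∀ i, 1 ≤ i → P.map (Z i) = gaussianReal 0 1) :
    ∀ (m n : ℕ), 1 ≤ n → ∀ t : ℝ, 0 ≤ t →
      P {ω | t < |∑ i ∈ Finset.Icc (m + 1) (m + n), Y ω * Z i ω|}
        ≤ ENNReal.ofReal (2 * Real.exp (-t ^ 2 / (2 * n))) :=
  bernstein_for_YZ_example_general P Y Z hYmeas hindep hYdist hZdist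
end

section
/- Let X_1, X_2, … be a sequence of real-valued random variables and suppose there are constants C > 0, c > 0, b ≥ 0 and γ ∈ (0,2) such that for all integers n ≥ 1 and all reals t ≥ 0, P{M(1,n) > t} ≤ C·exp(−c t² / (n + b t^γ)). Fix λ > 1 and set m_r = ⌈λ^r⌉ for r = 1, 2, …. Then there exists r₀ ≥ 1 with log log m_{r₀} > 0 such that Σ_{r=r₀}^{∞} P{ M(1, m_r) > √(c^{−1} m_{r+1} log log m_r) } < ∞. -/
/-!
Write `m_r = ⌈λ^r⌉` and `t_r = √(c⁻¹ m_{r+1} log log m_r)`, so that `c t_r² = m_{r+1} log log m_r`.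
Since `t_r² = O(r λ^r)` and `γ < 2`, the term `b t_r^γ` is `o(λ^r)`, while `m_{r+1} ≈ λ m_r`; hence
for any `β ∈ (1, λ)` eventually `β (m_r + b t_r^γ) ≤ m_{r+1}`. The tail bound then gives
`P{M(1, m_r) > t_r} ≤ C exp(-β log log m_r) = C (log m_r)^{-β} ≤ C (r log λ)^{-β}`,
which is summable because `β > 1`.
-/

open MeasureTheory Finset Filter Asymptotics Real

theorem isLittleO_mul_log_rpow {p : ℝ} (hp : p < 1) :
    (fun x : ℝ => (x * log x) ^ p) =o[atTop] id := by
  have h := (isBigO_refl (fun x : ℝ => x ^ p) atTop).mul_isLittleO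
    (isLittleO_log_rpow_rpow_atTop p (sub_pos.2 hp))
  refine h.congr' ?_ ?_
  · filter_upwards [eventually_ge_atTop 1] with x hx
    rw [mul_rpow (by positivity) (log_nonneg hx)]
  · filter_upwards [eventually_gt_atTop 0] with x hx
    rw [← rpow_add hx, add_sub_cancel, rpow_one, id]

theorem tendsto_ceil_pow_atTop {lam : ℝ} (hlam : 1 < lam) :
    Tendsto (fun r : ℕ => (⌈lam ^ r⌉₊ : ℝ)) atTop atTop :=
  tendsto_atTop_mono (fun _ => Nat.le_ceil _) (tendsto_pow_atTop_atTop_of_one_lt hlam)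

theorem ceil_pow_succ_le {lam : ℝ} (hlam : 1 ≤ lam) (r : ℕ) :
    (⌈lam ^ (r + 1)⌉₊ : ℝ) ≤ 2 * lam * ⌈lam ^ r⌉₊ := by
  have hm : (1 : ℝ) ≤ ⌈lam ^ r⌉₊ := by
    exact_mod_cast Nat.one_le_ceil_iff.2 (by positivity)
  have hceil := Nat.ceil_lt_add_one (by positivity : 0 ≤ lam ^ (r + 1))
  have hpow : lam ^ (r + 1) ≤ lam * ⌈lam ^ r⌉₊ := by
    rw [pow_succ']; gcongr; exact Nat.le_ceil _
  nlinarith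

theorem mul_ceil_pow_sub_one_le {lam : ℝ} (hlam : 0 ≤ lam) (r : ℕ) :
    lam * (⌈lam ^ r⌉₊ - 1) ≤ ⌈lam ^ (r + 1)⌉₊ := by
  have := Nat.ceil_lt_add_one (by positivity : 0 ≤ lam ^ r)
  calc lam * (⌈lam ^ r⌉₊ - 1) ≤ lam * lam ^ r := by gcongr; linarith
    _ = lam ^ (r + 1) := (pow_succ' _ _).symm
    _ ≤ _ := Nat.le_ceil _

theorem mul_log_le_log_ceil_pow {lam : ℝ} (hlam : 0 < lam) (r : ℕ) :
    r * log lam ≤ log ⌈lam ^ r⌉₊ := by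
  rw [← log_pow]
  exact log_le_log (by positivity) (Nat.le_ceil _)

theorem exp_neg_div_le_log_rpow_neg {n m B β : ℝ} (hn : 0 < n) (hlog : 1 < log n)
    (hB : 0 ≤ B) (hβ : β * (n + B) ≤ m) :
    exp (-(m * log (log n)) / (n + B)) ≤ log n ^ (-β) := by
  have hL : 0 < log (log n) := log_pos hlog
  rw [rpow_def_of_pos (by linarith), exp_le_exp, neg_div, mul_neg, neg_le_neg_iff,
    le_div_iff₀ (by linarith)]
  nlinarith

theorem eventually_tsum_add_lt_top {f : ℕ → ENNReal} {g : ℕ → ℝ} (hg : Summable g)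
    (hfg : ∀ᶠ r in atTop, f r ≤ ENNReal.ofReal (g r)) :
    ∀ᶠ r₀ in atTop, ∑' r, f (r₀ + r) < ⊤ := by
  obtain ⟨N, hN⟩ := eventually_atTop.1 hfg
  filter_upwards [eventually_ge_atTop N] with r₀ hr₀
  calc ∑' r, f (r₀ + r) ≤ ∑' r, ENNReal.ofReal (g (r₀ + r)) :=
        ENNReal.tsum_le_tsum fun r => hN _ (by omega)
    _ < ⊤ := (hg.comp_injective (add_right_injective r₀)).tsum_ofReal_lt_top

theorem eventually_one_lt_log_ceil_pow {lam : ℝ} (hlam : 1 < lam) :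
    ∀ᶠ r : ℕ in atTop, 1 < log ⌈lam ^ r⌉₊ :=
  (tendsto_log_atTop.comp (tendsto_ceil_pow_atTop hlam)).eventually_gt_atTop 1

theorem eventually_mul_ceil_pow_add_le {lam β c b γ : ℝ} (hlam : 1 < lam) (hβ0 : 0 ≤ β)
    (hβ : β < lam) (hc : 0 < c) (hb : 0 ≤ b) (hγ0 : 0 ≤ γ) (hγ2 : γ < 2) :
    ∀ᶠ r : ℕ in atTop,
      β * (⌈lam ^ r⌉₊ + b * sqrt (c⁻¹ * ⌈lam ^ (r + 1)⌉₊ * log (log ⌈lam ^ r⌉₊)) ^ γ)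
        ≤ ⌈lam ^ (r + 1)⌉₊ := by
  set A := 2 * lam / c
  set δ := (lam - β) / 2
  have hδ : 0 < δ := by simp only [δ]; linarith
  have hlittle := ((isLittleO_mul_log_rpow (p := γ / 2) (by linarith)).const_mul_left
    (β * b * A ^ (γ / 2))).def hδ
  have hev : ∀ᶠ x : ℝ in atTop, exp 1 ≤ x ∧
      β * b * A ^ (γ / 2) * (x * log x) ^ (γ / 2) ≤ δ * x ∧ lam ≤ δ * x := by
    filter_upwards [eventually_ge_atTop (exp 1), hlittle, eventually_ge_atTop (lam / δ)]
      with x hx hfx hlx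
    rw [id, norm_of_nonneg ((exp_pos 1).le.trans hx)] at hfx
    exact ⟨hx, (le_norm_self _).trans hfx, (div_le_iff₀' hδ).1 hlx⟩
  filter_upwards [(tendsto_ceil_pow_atTop hlam).eventually hev] with r ⟨hexp, hsmall, hlarge⟩
  set u : ℝ := (⌈lam ^ r⌉₊ : ℝ)
  set u' : ℝ := (⌈lam ^ (r + 1)⌉₊ : ℝ)
  have hu : 0 < u := lt_of_lt_of_le (exp_pos 1) hexp
  have hlog : 1 ≤ log u := (le_log_iff_exp_le hu).2 hexp
  have hL : 0 ≤ log (log u) := log_nonneg hlog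
  have hy : c⁻¹ * u' * log (log u) ≤ A * (u * log u) := by
    calc c⁻¹ * u' * log (log u) ≤ c⁻¹ * (2 * lam * u) * log u := by
          gcongr
          · exact ceil_pow_succ_le hlam.le r
          · exact log_le_self (by linarith)
      _ = A * (u * log u) := by simp only [A]; ring
  have ht : sqrt (c⁻¹ * u' * log (log u)) ^ γ ≤ A ^ (γ / 2) * (u * log u) ^ (γ / 2) := by
    rw [← rpow_div_two_eq_sqrt γ (by positivity), ← mul_rpow (by positivity) (by positivity)]
    exact rpow_le_rpow (by positivity) hy (by linarith)
  have hu' : lam * (u - 1) ≤ u' := mul_ceil_pow_sub_one_le (by linarith) r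
  calc β * (u + b * sqrt (c⁻¹ * u' * log (log u)) ^ γ)
      ≤ β * u + β * b * (A ^ (γ / 2) * (u * log u) ^ (γ / 2)) := by
        rw [mul_add, mul_assoc β b]; gcongr
    _ ≤ β * u + δ * u := by rw [← mul_assoc]; gcongr
    _ ≤ u' := by simp only [δ] at hlarge ⊢; nlinarith

theorem eventually_exp_le_rpow {lam β c b γ : ℝ} (hlam : 1 < lam) (hβ0 : 0 ≤ β)
    (hβ : β < lam) (hc : 0 < c) (hb : 0 ≤ b) (hγ0 : 0 ≤ γ) (hγ2 : γ < 2) :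
    ∀ᶠ r : ℕ in atTop,
      exp (-(c * sqrt (c⁻¹ * ⌈lam ^ (r + 1)⌉₊ * log (log ⌈lam ^ r⌉₊)) ^ 2) /
          (⌈lam ^ r⌉₊ + b * sqrt (c⁻¹ * ⌈lam ^ (r + 1)⌉₊ * log (log ⌈lam ^ r⌉₊)) ^ γ))
        ≤ (r * log lam) ^ (-β) := by
  filter_upwards [eventually_mul_ceil_pow_add_le hlam hβ0 hβ hc hb hγ0 hγ2,
    eventually_one_lt_log_ceil_pow hlam, eventually_ge_atTop 1] with r hden hlog hr
  have hu : (0 : ℝ) < ⌈lam ^ r⌉₊ := Nat.cast_pos.2 (Nat.ceil_pos.2 (by positivity))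
  rw [sq_sqrt (by have := log_pos hlog; positivity), ← mul_assoc, ← mul_assoc,
    mul_inv_cancel₀ hc.ne', one_mul]
  calc _ ≤ log ⌈lam ^ r⌉₊ ^ (-β) :=
        exp_neg_div_le_log_rpow_neg hu hlog (by positivity) hden
    _ ≤ (r * log lam) ^ (-β) :=
        rpow_le_rpow_of_nonpos (mul_pos (by exact_mod_cast hr) (log_pos hlam))
          (mul_log_le_log_ceil_pow (by linarith) r) (by linarith)

/-- The Borel–Cantelli step in the proof of Corollary 1 of Kevei–Mason: if the
maxima `M(1,n) = max_{1 ≤ j ≤ n} |S(1,j)|` satisfy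
`P{M(1,n) > t} ≤ C · exp(−c t² / (n + b t^γ))`, then for `λ > 1` and
`m_r = ⌈λ^r⌉` there is an `r₀ ≥ 1` with `log log m_{r₀} > 0` such that
`∑_{r ≥ r₀} P{ M(1, m_r) > √(c⁻¹ m_{r+1} log log m_r) } < ∞`. -/
theorem borel_cantelli_step
    {Ω : Type*} [MeasurableSpace Ω] (P : Measure Ω) [IsProbabilityMeasure P]
    (X : ℕ → Ω → ℝ) (C c b γ : ℝ)
    (hC : 0 < C) (hc : 0 < c) (hb : 0 ≤ b) (hγ : γ ∈ Set.Ioo (0 : ℝ) 2)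
    (hmax : ∀ n : ℕ, ∀ hn : 1 ≤ n, ∀ t : ℝ, 0 ≤ t →
      P {ω | t < (Finset.Icc 1 n).sup' (Finset.nonempty_Icc.mpr hn)
            (fun j => |∑ i ∈ Finset.Icc 1 j, X i ω|)}
        ≤ ENNReal.ofReal (C * Real.exp (-(c * t ^ 2) / (n + b * t ^ γ))))
    (lam : ℝ) (hlam : 1 < lam) :
    ∃ r₀ : ℕ, 1 ≤ r₀ ∧ 0 < Real.log (Real.log (⌈lam ^ r₀⌉₊ : ℝ)) ∧
      (∑' r : ℕ,
        P {ω | Real.sqrt (c⁻¹ * (⌈lam ^ (r₀ + r + 1)⌉₊ : ℝ) *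
              Real.log (Real.log (⌈lam ^ (r₀ + r)⌉₊ : ℝ)))
            < (Finset.Icc 1 ⌈lam ^ (r₀ + r)⌉₊).sup'
                (Finset.nonempty_Icc.mpr
                  (Nat.one_le_ceil_iff.mpr (pow_pos (lt_trans one_pos hlam) _)))
                (fun j => |∑ i ∈ Finset.Icc 1 j, X i ω|)}) < ⊤ := by
  set β := (1 + lam) / 2
  have hβ1 : 1 < β := by simp only [β]; linarith
  have hβlam : β < lam := by simp only [β]; linarith
  have hlam0 : 0 < lam := zero_lt_one.trans hlam
  have hbound := (eventually_exp_le_rpow hlam (zero_lt_one.trans hβ1).le hβlam hc hb hγ.1.le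
    hγ.2).mono fun r hr =>
      (hmax _ (Nat.one_le_ceil_iff.2 (pow_pos hlam0 r)) _ (sqrt_nonneg _)).trans
        (ENNReal.ofReal_le_ofReal (mul_le_mul_of_nonneg_left hr hC.le))
  have hsum : Summable fun r : ℕ => C * (r * log lam) ^ (-β) := by
    simp_rw [mul_rpow (Nat.cast_nonneg _) (log_pos hlam).le]
    exact ((summable_nat_rpow.2 (by linarith)).mul_right _).mul_left C
  obtain ⟨r₀, hr₀, hlog, htail⟩ := ((eventually_ge_atTop 1).and
    (((eventually_one_lt_log_ceil_pow hlam).mono fun r h => log_pos h).and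
      (eventually_tsum_add_lt_top hsum hbound))).exists
  exact ⟨r₀, hr₀, hlog, htail⟩
end

section
/- Let X_1, X_2, … be a sequence of real-valued random variables and suppose there are constants C > 0, c > 0, b ≥ 0 and γ ∈ (0,2) such that for all integers n ≥ 1 and all reals t ≥ 0, P{M(1,n) > t} ≤ C·exp(−c t² / (n + b t^γ)). Fix λ > 1 and set m_r = ⌈λ^r⌉ for r = 1, 2, …. Then with probability 1, limsup_{r→∞} M(1, m_r) / √(m_r · log log m_r) ≤ √(λ / c). -/
/-!
Put `t_r = ρ √(m_r log log m_r)` with `c ρ² > λ`, so `c ρ² > 1`. Since `γ < 2`, the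
correction `b t_r^γ` is `o(m_r)`, and `log log m_r ≥ log r + log log λ`; hence the tail
bound at `t_r` is at most `C r^(-A)` for some `A > 1`. These bounds are summable, so by
Borel–Cantelli almost surely `M(1, m_r) ≤ t_r` for all large `r`, and letting `ρ ↓ √(λ/c)`
gives the limsup bound.
-/

open MeasureTheory Filter Real Asymptotics Topology

lemma isLittleO_sqrt_mul_log_log_rpow {γ : ℝ} (hγ0 : 0 < γ) (hγ2 : γ < 2) :
    (fun x => √(x * log (log x)) ^ γ) =o[atTop] id := by
  have hs : 0 < 2 / γ - 1 := by rw [sub_pos, lt_div_iff₀ hγ0]; linarith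
  have hloglog : (fun x => log (log x)) =o[atTop] fun x => x ^ (2 / γ - 1) :=
    (isLittleO_log_id_atTop.comp_tendsto tendsto_log_atTop).trans
      (isLittleO_log_rpow_atTop hs)
  have hprod : (fun x => x * log (log x)) =o[atTop] fun x => x ^ (2 / γ) := by
    refine ((isBigO_refl id atTop).mul_isLittleO hloglog).congr' EventuallyEq.rfl ?_
    filter_upwards [eventually_gt_atTop 0] with x hx
    rw [id, ← rpow_one_add' hx.le (by linarith), add_sub_cancel]
  have hnonneg : ∀ᶠ x : ℝ in atTop, 0 ≤ x * log (log x) := by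
    filter_upwards [eventually_ge_atTop (exp 1)] with x hx
    have hx0 : 0 < x := (exp_pos 1).trans_le hx
    have hlog : 1 ≤ log x := by rwa [le_log_iff_exp_le hx0]
    exact mul_nonneg hx0.le (log_nonneg hlog)
  have hpow_nonneg : ∀ᶠ x : ℝ in atTop, 0 ≤ x ^ (2 / γ) := by
    filter_upwards [eventually_ge_atTop 0] with x hx using rpow_nonneg hx _
  refine (hprod.rpow (half_pos hγ0) hpow_nonneg).congr' ?_ ?_
  · filter_upwards [hnonneg] with x hx
    rw [sqrt_eq_rpow, ← rpow_mul hx, one_div_mul_eq_div]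
  · filter_upwards [eventually_gt_atTop 0] with x hx
    rw [← rpow_mul hx.le, show 2 / γ * (γ / 2) = 1 by field_simp, rpow_one, id]

lemma log_add_log_log_le_log_log {lam x : ℝ} (hlam : 1 < lam) {r : ℕ} (hr : 1 ≤ r)
    (hx : lam ^ r ≤ x) : log r + log (log lam) ≤ log (log x) := by
  have hr0 : (0 : ℝ) < r := by exact_mod_cast hr
  have hloglam : 0 < log lam := log_pos hlam
  rw [← log_mul hr0.ne' hloglam.ne', ← log_pow]
  have hpow : 0 < lam ^ r := pow_pos (by linarith) r
  exact log_le_log (by rw [log_pow]; positivity) (log_le_log hpow hx)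

lemma eventually_mul_log_le_tail_exponent {m : ℕ → ℝ} {c b γ lam ρ A : ℝ} (hc : 0 ≤ c)
    (hb : 0 ≤ b) (hγ0 : 0 < γ) (hγ2 : γ < 2) (hlam : 1 < lam) (hm : ∀ r, lam ^ r ≤ m r)
    (hρ : 0 ≤ ρ) (hA : A < c * ρ ^ 2) :
    ∀ᶠ r : ℕ in atTop, A * log r ≤ c * (ρ * √(m r * log (log (m r)))) ^ 2 /
      (m r + b * (ρ * √(m r * log (log (m r)))) ^ γ) := by
  set L : ℕ → ℝ := fun r => log (log (m r))
  set ε : ℕ → ℝ := fun r => b * (ρ * √(m r * L r)) ^ γ / m r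
  have hm_pos : ∀ r, 0 < m r := fun r => (pow_pos (by linarith) r).trans_le (hm r)
  have hm_top : Tendsto m atTop atTop :=
    tendsto_atTop_mono hm (tendsto_pow_atTop_atTop_of_one_lt hlam)
  have hlog_top : Tendsto (fun r : ℕ => log r) atTop atTop :=
    tendsto_log_atTop.comp tendsto_natCast_atTop_atTop
  have hε : Tendsto ε atTop (𝓝 0) := by
    have h := ((isLittleO_sqrt_mul_log_log_rpow hγ0 hγ2).tendsto_div_nhds_zero.comp
      hm_top).const_mul (b * ρ ^ γ)
    rw [mul_zero] at h
    refine h.congr fun r => ?_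
    simp only [ε, L, Function.comp, id, mul_rpow hρ (sqrt_nonneg _)]
    ring
  have hratio : Tendsto (fun r : ℕ => c * ρ ^ 2 * (1 + log (log lam) / log r) / (1 + ε r))
      atTop (𝓝 (c * ρ ^ 2)) := by
    have hlog_ratio : Tendsto (fun r : ℕ => log (log lam) / log r) atTop (𝓝 0) :=
      tendsto_const_nhds.div_atTop hlog_top
    have h := ((hlog_ratio.const_add 1).const_mul (c * ρ ^ 2)).div (hε.const_add 1)
      (by norm_num)
    rw [add_zero, mul_one, div_one] at h
    exact h.congr fun r => rfl
  filter_upwards [hratio.eventually (lt_mem_nhds hA), eventually_ge_atTop 1,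
    hlog_top.eventually_gt_atTop 0, hlog_top.eventually_ge_atTop (-log (log lam))]
    with r hAr hr hlog hlog'
  show A * log r ≤ c * (ρ * √(m r * L r)) ^ 2 / (m r + b * (ρ * √(m r * L r)) ^ γ)
  have hL : log r + log (log lam) ≤ L r := log_add_log_log_le_log_log hlam hr (hm r)
  have hε0 : 0 < 1 + ε r := by
    have : 0 ≤ ε r := by have := hm_pos r; positivity
    linarith
  have hmL : 0 ≤ m r * L r := mul_nonneg (hm_pos r).le (by linarith)
  calc A * log r
      ≤ c * ρ ^ 2 * (1 + log (log lam) / log r) / (1 + ε r) * log r := by gcongr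
    _ = c * ρ ^ 2 * (log r + log (log lam)) / (1 + ε r) := by field_simp
    _ ≤ c * ρ ^ 2 * L r / (1 + ε r) := by gcongr
    _ = _ := by
      simp only [ε]
      rw [mul_pow, sq_sqrt hmL]
      field_simp [(hm_pos r).ne']

lemma ae_eventually_notMem_of_summable_bound {Ω : Type*} [MeasurableSpace Ω] {μ : Measure Ω}
    {s : ℕ → Set Ω} {g : ℕ → ℝ} (hg : Summable g)
    (hs : ∀ᶠ r in atTop, μ (s r) ≤ ENNReal.ofReal (g r)) :
    ∀ᵐ ω ∂μ, ∀ᶠ r in atTop, ω ∉ s r := by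
  obtain ⟨N, hN⟩ := eventually_atTop.1 hs
  have hg_tail : ∑' k, ENNReal.ofReal (g (k + N)) ≠ ⊤ :=
    ENNReal.tsum_coe_ne_top_iff_summable.2 ((summable_nat_add_iff N).2 hg).toNNReal
  have htail : ∑' k, μ (s (k + N)) ≠ ⊤ :=
    ne_top_of_le_ne_top hg_tail (ENNReal.tsum_le_tsum fun k => hN (k + N) (Nat.le_add_left N k))
  filter_upwards [ae_eventually_notMem htail] with ω hω
  rw [← map_add_atTop_eq_nat N]
  exact hω

lemma ae_limsup_le_of_forall_lt {Ω ι : Type*} [MeasurableSpace Ω] {μ : Measure Ω}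
    {l : Filter ι} {f : ι → Ω → ℝ} {a : ℝ}
    (h : ∀ ρ, a < ρ → ∀ᵐ ω ∂μ, ∀ᶠ i in l, f i ω ≤ ρ) :
    ∀ᵐ ω ∂μ, limsup (fun i => (f i ω : EReal)) l ≤ a := by
  obtain ⟨u, -, hau, hu⟩ := exists_seq_strictAnti_tendsto a
  filter_upwards [ae_all_iff.2 fun n => h (u n) (hau n)] with ω hω
  refine EReal.le_of_forall_lt_iff_le.1 fun z hz => ?_
  obtain ⟨n, hn⟩ := (hu.eventually (gt_mem_nhds (EReal.coe_lt_coe_iff.1 hz))).exists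
  exact limsup_le_of_le (by isBoundedDefault)
    ((hω n).mono fun i hi => EReal.coe_le_coe_iff.2 (hi.trans hn.le))

theorem ae_eventually_le_mul_sqrt_mul_log_log_of_tail_bound {Ω : Type*} [MeasurableSpace Ω]
    {P : Measure Ω} {Y : ℕ → Ω → ℝ} {m : ℕ → ℝ} {C c b γ lam ρ : ℝ} (hC : 0 ≤ C)
    (hb : 0 ≤ b) (hγ0 : 0 < γ) (hγ2 : γ < 2) (hlam : 1 < lam) (hm : ∀ r, lam ^ r ≤ m r)
    (htail : ∀ r, ∀ t, 0 ≤ t →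
      P {ω | t < Y r ω} ≤ ENNReal.ofReal (C * exp (-(c * t ^ 2) / (m r + b * t ^ γ))))
    (hρ : 0 ≤ ρ) (hcρ : 1 < c * ρ ^ 2) :
    ∀ᵐ ω ∂P, ∀ᶠ r in atTop, Y r ω ≤ ρ * √(m r * log (log (m r))) := by
  obtain ⟨A, hA1, hAc⟩ := exists_between hcρ
  have hc : 0 ≤ c := (pos_of_mul_pos_left (by linarith) (sq_nonneg ρ)).le
  have hbound : ∀ᶠ r : ℕ in atTop, P {ω | ρ * √(m r * log (log (m r))) < Y r ω} ≤
      ENNReal.ofReal (C * (r : ℝ) ^ (-A)) := by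
    filter_upwards [eventually_mul_log_le_tail_exponent hc hb hγ0 hγ2 hlam hm hρ hAc,
      eventually_gt_atTop 0] with r hr hr0
    refine (htail r _ (by positivity)).trans (ENNReal.ofReal_le_ofReal ?_)
    rw [rpow_def_of_pos (Nat.cast_pos.2 hr0), neg_div]
    gcongr
    linarith
  have hsum : Summable fun r : ℕ => C * (r : ℝ) ^ (-A) :=
    (summable_nat_rpow.2 (by linarith)).mul_left C
  filter_upwards [ae_eventually_notMem_of_summable_bound hsum hbound] with ω hω
  filter_upwards [hω] with r hr
  simpa using hr

theorem limsup_along_subsequence_general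
    {Ω : Type*} [MeasurableSpace Ω] (P : Measure Ω)
    (X : ℕ → Ω → ℝ) (C c b γ : ℝ)
    (hC : 0 < C) (hc : 0 < c) (hb : 0 ≤ b) (hγ : γ ∈ Set.Ioo (0 : ℝ) 2)
    (hmax : ∀ n : ℕ, ∀ hn : 1 ≤ n, ∀ t : ℝ, 0 ≤ t →
      P {ω | t < (Finset.Icc 1 n).sup' (Finset.nonempty_Icc.mpr hn)
            (fun j => |∑ i ∈ Finset.Icc 1 j, X i ω|)}
        ≤ ENNReal.ofReal (C * Real.exp (-(c * t ^ 2) / (n + b * t ^ γ))))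
    (lam : ℝ) (hlam : 1 < lam) :
    ∀ᵐ ω ∂P,
      Filter.limsup
          (fun r : ℕ =>
            (((Finset.Icc 1 ⌈lam ^ r⌉₊).sup'
                  (Finset.nonempty_Icc.mpr
                    (Nat.one_le_ceil_iff.mpr (pow_pos (lt_trans one_pos hlam) _)))
                  (fun j => |∑ i ∈ Finset.Icc 1 j, X i ω|) /
                Real.sqrt ((⌈lam ^ r⌉₊ : ℝ) *
                  Real.log (Real.log (⌈lam ^ r⌉₊ : ℝ))) : ℝ) : EReal))
          Filter.atTop
        ≤ ((Real.sqrt (lam / c) : ℝ) : EReal) := by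
  refine ae_limsup_le_of_forall_lt fun ρ hρ => ?_
  have hρ0 : 0 < ρ := (sqrt_nonneg _).trans_lt hρ
  have hcρ : 1 < c * ρ ^ 2 := by
    rw [sqrt_lt' hρ0, div_lt_iff₀' hc] at hρ
    linarith
  have hceil : ∀ r : ℕ, 1 ≤ ⌈lam ^ r⌉₊ := fun r =>
    Nat.one_le_ceil_iff.2 (pow_pos (by linarith) r)
  filter_upwards [ae_eventually_le_mul_sqrt_mul_log_log_of_tail_bound hC.le hb hγ.1 hγ.2 hlam
    (fun r => Nat.le_ceil (lam ^ r)) (fun r => hmax _ (hceil r)) hρ0.le hcρ] with ω hω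
  filter_upwards [hω] with r hr
  exact div_le_of_le_mul₀ (sqrt_nonneg _) hρ0.le hr

/-- Inequality (10) in the proof of Corollary 1 of Kevei–Mason: if the maxima
`M(1,n) = max_{1 ≤ j ≤ n} |S(1,j)|` satisfy
`P{M(1,n) > t} ≤ C · exp(−c t² / (n + b t^γ))`, then for `λ > 1` and
`m_r = ⌈λ^r⌉`, with probability 1,
`limsup_{r→∞} M(1, m_r) / √(m_r log log m_r) ≤ √(λ/c)`. -/
theorem limsup_along_subsequence
    {Ω : Type*} [MeasurableSpace Ω] (P : Measure Ω) [IsProbabilityMeasure P]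
    (X : ℕ → Ω → ℝ) (C c b γ : ℝ)
    (hC : 0 < C) (hc : 0 < c) (hb : 0 ≤ b) (hγ : γ ∈ Set.Ioo (0 : ℝ) 2)
    (hmax : ∀ n : ℕ, ∀ hn : 1 ≤ n, ∀ t : ℝ, 0 ≤ t →
      P {ω | t < (Finset.Icc 1 n).sup' (Finset.nonempty_Icc.mpr hn)
            (fun j => |∑ i ∈ Finset.Icc 1 j, X i ω|)}
        ≤ ENNReal.ofReal (C * Real.exp (-(c * t ^ 2) / (n + b * t ^ γ))))
    (lam : ℝ) (hlam : 1 < lam) :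
    ∀ᵐ ω ∂P,
      Filter.limsup
          (fun r : ℕ =>
            (((Finset.Icc 1 ⌈lam ^ r⌉₊).sup'
                  (Finset.nonempty_Icc.mpr
                    (Nat.one_le_ceil_iff.mpr (pow_pos (lt_trans one_pos hlam) _)))
                  (fun j => |∑ i ∈ Finset.Icc 1 j, X i ω|) /
                Real.sqrt ((⌈lam ^ r⌉₊ : ℝ) *
                  Real.log (Real.log (⌈lam ^ r⌉₊ : ℝ))) : ℝ) : EReal))
          Filter.atTop
        ≤ ((Real.sqrt (lam / c) : ℝ) : EReal) :=
  limsup_along_subsequence_general P X C c b γ hC hc hb hγ hmax lam hlam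
end
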